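/- Let p q : ℕ with q + 1 ≤ p and let x : ℝ with 0 ≤ x. Then ⌊2^q * roundOdd p x⌋ = ⌊2^q * x⌋. (All binary digits of the round-to-odd result up to position p - 1 agree with those of x: truncating roundOdd p x to any precision q ≤ p - 1 gives the same result as truncating x.) -/

import Mathlib

open Classical in
/-- Round-to-odd at precision `p`: if `x` is an integer multiple of `2^(-p)` it is
unchanged; otherwise it rounds to the unique multiple of `2^(-p)` with odd numerator
strictly between the two consecutive multiples of `2^(-p)` enclosing `x`. -/
noncomputable def roundOdd (p : ℕ) (x : ℝ) : ℝ :=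
  if ∃ m : ℤ, (2 : ℝ) ^ p * x = (m : ℝ) then x
  else ((2 * ⌊(2 : ℝ) ^ (p - 1) * x⌋ + 1 : ℤ) : ℝ) / 2 ^ p

open Classical in
/-- Round-to-nearest-ties-to-even at precision `k`. -/
noncomputable def RN (k : ℕ) (x : ℝ) : ℝ :=
  ((if Int.fract ((2 : ℝ) ^ k * x) = 1 / 2 then ⌊(2 : ℝ) ^ k * x⌋ + ⌊(2 : ℝ) ^ k * x⌋ % 2
    else round ((2 : ℝ) ^ k * x) : ℤ) : ℝ) / 2 ^ k

/-- Round-to-nearest-ties-to-away at precision `k`. -/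
noncomputable def RA (k : ℕ) (x : ℝ) : ℝ :=
  if 0 ≤ x then ((⌊(2 : ℝ) ^ k * x + 1 / 2⌋ : ℤ) : ℝ) / 2 ^ k
  else ((⌈(2 : ℝ) ^ k * x - 1 / 2⌉ : ℤ) : ℝ) / 2 ^ k

/-- Round-towards-zero at precision `k`. -/
noncomputable def RZ (k : ℕ) (x : ℝ) : ℝ :=
  if 0 ≤ x then ((⌊(2 : ℝ) ^ k * x⌋ : ℤ) : ℝ) / 2 ^ k
  else ((⌈(2 : ℝ) ^ k * x⌉ : ℤ) : ℝ) / 2 ^ k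

/-- Round-towards-positive-infinity at precision `k`. -/
noncomputable def RU (k : ℕ) (x : ℝ) : ℝ := ((⌈(2 : ℝ) ^ k * x⌉ : ℤ) : ℝ) / 2 ^ k

/-- Round-towards-negative-infinity at precision `k`. -/
noncomputable def RD (k : ℕ) (x : ℝ) : ℝ := ((⌊(2 : ℝ) ^ k * x⌋ : ℤ) : ℝ) / 2 ^ k

/-!
When `x` is not representable at precision `p`, with `n = ⌊2^(p-1) x⌋`, round-to-odd returns
`(2n + 1) / 2^p`, the midpoint of the cell `[n / 2^(p-1), (n + 1) / 2^(p-1))` containing `x`.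
So `x` and its rounding truncate alike at precision `p - 1`, and truncation at any coarser
precision `q` factors through that one, since `⌊y⌋ = ⌊2^m y⌋ / 2^m`.
-/

lemma Int.floor_eq_of_floor_natCast_mul_eq {R : Type*} [Ring R] [LinearOrder R] [FloorRing R]
    [IsStrictOrderedRing R] {n : ℕ} (hn : n ≠ 0) {a b : R} (h : ⌊(n : R) * a⌋ = ⌊(n : R) * b⌋) :
    ⌊a⌋ = ⌊b⌋ := by
  rw [← Int.natCast_mul_floor_div_cancel hn a, h, Int.natCast_mul_floor_div_cancel hn b]

lemma floor_two_pow_mul_eq_of_le {q k : ℕ} (hqk : q ≤ k) {a b : ℝ}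
    (h : ⌊(2 : ℝ) ^ k * a⌋ = ⌊(2 : ℝ) ^ k * b⌋) : ⌊(2 : ℝ) ^ q * a⌋ = ⌊(2 : ℝ) ^ q * b⌋ := by
  obtain ⟨m, rfl⟩ := Nat.exists_eq_add_of_le hqk
  refine Int.floor_eq_of_floor_natCast_mul_eq (pow_ne_zero m two_ne_zero : 2 ^ m ≠ 0) ?_
  simpa only [Nat.cast_pow, Nat.cast_ofNat, ← mul_assoc, ← pow_add, add_comm m q] using h

lemma floor_two_pow_pred_mul_roundOdd {p : ℕ} (hp : 1 ≤ p) (x : ℝ) :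
    ⌊(2 : ℝ) ^ (p - 1) * roundOdd p x⌋ = ⌊(2 : ℝ) ^ (p - 1) * x⌋ := by
  unfold roundOdd
  split_ifs
  · rfl
  set n := ⌊(2 : ℝ) ^ (p - 1) * x⌋
  have hmid : (2 : ℝ) ^ (p - 1) * (((2 * n + 1 : ℤ) : ℝ) / 2 ^ p) = n + 1 / 2 := by
    obtain ⟨k, rfl⟩ := Nat.exists_eq_add_of_le' hp
    rw [Nat.add_sub_cancel, pow_succ]
    field_simp
    push_cast
    ring
  rw [hmid, Int.floor_eq_iff]
  constructor <;> linarith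

theorem roundOdd_floor_agree_general (p q : ℕ) (hqp : q + 1 ≤ p) (x : ℝ) :
    ⌊(2 : ℝ) ^ q * roundOdd p x⌋ = ⌊(2 : ℝ) ^ q * x⌋ :=
  floor_two_pow_mul_eq_of_le (Nat.le_sub_one_of_lt hqp)
    (floor_two_pow_pred_mul_roundOdd (Nat.one_le_of_lt hqp) x)

theorem roundOdd_floor_agree (p q : ℕ) (hqp : q + 1 ≤ p) (x : ℝ) (hx : 0 ≤ x) :
    ⌊(2 : ℝ) ^ q * roundOdd p x⌋ = ⌊(2 : ℝ) ^ q * x⌋ :=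
  roundOdd_floor_agree_general p q hqp x
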